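/- Let X be a compact Hausdorff space with dim X < n, and let (A₁,B₁),…,(Aₙ,Bₙ) be n pairs of disjoint closed subsets of X. Then there exist closed sets P₁,…,Pₙ ⊆ X such that each Pᵢ is a partition between Aᵢ and Bᵢ in X and ⋂ᵢ Pᵢ = ∅. -/

import Mathlib

open Set Topology Filter

/-- The covering dimension of `X` is at most `n`: every finite open cover has a finite open
refinement of multiplicity at most `n + 1`. -/
def CovDimLE (X : Type*) [TopologicalSpace X] (n : ℕ) : Prop :=
  ∀ 𝒰 : Set (Set X), 𝒰.Finite → (∀ U ∈ 𝒰, IsOpen U) → ⋃₀ 𝒰 = Set.univ →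
    ∃ 𝒱 : Set (Set X), 𝒱.Finite ∧ (∀ V ∈ 𝒱, IsOpen V) ∧ ⋃₀ 𝒱 = Set.univ ∧
      (∀ V ∈ 𝒱, ∃ U ∈ 𝒰, V ⊆ U) ∧
      ∀ x : X, ({V ∈ 𝒱 | x ∈ V}).ncard ≤ n + 1

/-- The covering dimension of `X`, as an extended natural number (`⊤` if infinite). -/
noncomputable def covDim (X : Type*) [TopologicalSpace X] : ℕ∞ :=
  sInf {m : ℕ∞ | ∃ n : ℕ, m = (n : ℕ∞) ∧ CovDimLE X n}

/-- A topological space is compactly finite-dimensional if the covering dimensions of its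
compact subsets are bounded by a common finite bound. -/
def CompactlyFinDim (G : Type*) [TopologicalSpace G] : Prop :=
  ∃ n : ℕ, ∀ K : Set G, IsCompact K → covDim K ≤ (n : ℕ∞)

/-- A subspace `X ⊆ G` is locally continuum-connected at `x`: every neighborhood `U` of `x`
in `X` contains a neighborhood `V` of `x` in `X` such that every `y ∈ V` can be joined to `x`
by a compact connected subset of `U`. -/
def LocContConnWithinAt {G : Type*} [TopologicalSpace G] (X : Set G) (x : G) : Prop :=
  ∀ U : Set G, U ⊆ X → U ∈ 𝓝[X] x →
    ∃ V : Set G, V ⊆ U ∧ V ∈ 𝓝[X] x ∧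
      ∀ y ∈ V, ∃ K : Set G, K ⊆ U ∧ IsCompact K ∧ IsConnected K ∧ x ∈ K ∧ y ∈ K

/-- A space is locally continuum-connected at `x`. -/
def LocContConnAt {X : Type*} [TopologicalSpace X] (x : X) : Prop :=
  ∀ U ∈ 𝓝 x, ∃ V ∈ 𝓝 x, V ⊆ U ∧
    ∀ y ∈ V, ∃ K : Set X, K ⊆ U ∧ IsCompact K ∧ IsConnected K ∧ x ∈ K ∧ y ∈ K

/-- A space is locally continuum-connected if it is so at every point. -/
def LocContConn (X : Type*) [TopologicalSpace X] : Prop := ∀ x : X, LocContConnAt x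

/-- `L` is a partition between `A` and `B`: `L` is closed and its complement is a disjoint
union of open sets containing `A` and `B` respectively. -/
def IsPartitionBetween {X : Type*} [TopologicalSpace X] (L A B : Set X) : Prop :=
  IsClosed L ∧ ∃ U V : Set X, IsOpen U ∧ IsOpen V ∧ A ⊆ U ∧ B ⊆ V ∧
    Disjoint U V ∧ U ∪ V = Lᶜ

/-- A network for a topological space. -/
def IsNetwork {X : Type*} [TopologicalSpace X] (N : Set (Set X)) : Prop :=
  ∀ U : Set X, IsOpen U → ∀ x ∈ U, ∃ A ∈ N, x ∈ A ∧ A ⊆ U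

/-- A cosmic space: a regular space with a countable network. -/
def Cosmic (X : Type*) [TopologicalSpace X] : Prop :=
  RegularSpace X ∧ ∃ N : Set (Set X), N.Countable ∧ IsNetwork N


open Module MeasureTheory

lemma affine_exchange' {E : Type*} [AddCommGroup E] [Module ℝ E] {S : Set E} {a c : E}
    (h1 : c ∈ affineSpan ℝ (insert a S)) (h2 : c ∉ affineSpan ℝ S) :
    a ∈ affineSpan ℝ (insert c S) := by
  rcases S.eq_empty_or_nonempty with rfl | ⟨p₀, hp₀⟩
  · simp only [insert_empty_eq] at h1 ⊢
    rw [AffineSubspace.mem_affineSpan_singleton] at h1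
    rw [AffineSubspace.mem_affineSpan_singleton]
    exact h1.symm
  · have hp₀' : p₀ ∈ affineSpan ℝ S := mem_affineSpan ℝ hp₀
    rw [← affineSpan_insert_affineSpan,
      AffineSubspace.mem_affineSpan_insert_iff hp₀'] at h1
    obtain ⟨r, p1, hp1, hc⟩ := h1
    have hr : r ≠ 0 := by
      rintro rfl
      apply h2
      rw [hc]; simpa using hp1
    have ha : a = r⁻¹ • (c -ᵥ p1 : E) +ᵥ p₀ := by
      have : (c -ᵥ p1 : E) = r • (a -ᵥ p₀) := by
        rw [hc]; simp [vadd_vsub_assoc]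
      rw [this, smul_smul, inv_mul_cancel₀ hr, one_smul]
      simp
    rw [← affineSpan_insert_affineSpan, AffineSubspace.mem_affineSpan_insert_iff hp1]
    exact ⟨r⁻¹, p₀, hp₀', ha⟩

lemma affineSpan_ne_top' {E : Type*} [AddCommGroup E] [Module ℝ E] [FiniteDimensional ℝ E]
    {s : Set E} (hs : s.Finite) (hcard : s.ncard ≤ finrank ℝ E) :
    affineSpan ℝ s ≠ ⊤ := by
  classical
  intro h
  rcases s.eq_empty_or_nonempty with rfl | hne
  · rw [AffineSubspace.span_empty] at h
    have : (0 : E) ∈ (⊥ : AffineSubspace ℝ E) := h.symm ▸ AffineSubspace.mem_top ℝ E 0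
    exact AffineSubspace.notMem_bot ℝ E (0 : E) this
  · have hdir : vectorSpan ℝ s = ⊤ := by
      rw [← direction_affineSpan, h, AffineSubspace.direction_top]
    have hm : 1 ≤ hs.toFinset.card := by
      rw [Finset.one_le_card, Set.Finite.toFinset_nonempty]; exact hne
    have hc : hs.toFinset.card = (hs.toFinset.card - 1) + 1 := by omega
    have hle := finrank_vectorSpan_image_finset_le ℝ (id : E → E) hs.toFinset hc
    rw [Finset.image_id, Set.Finite.coe_toFinset, hdir] at hle
    rw [finrank_top] at hle
    rw [Set.ncard_eq_toFinset_card _ hs] at hcard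
    omega

lemma exists_ball_avoid {n : ℕ} {α : Type*} (s : Finset α)
    (A : α → AffineSubspace ℝ (Fin n → ℝ)) (hA : ∀ a ∈ s, A a ≠ ⊤)
    (b : Fin n → ℝ) {ε : ℝ} (hε : 0 < ε) :
    ∃ x ∈ Metric.ball b ε, ∀ a ∈ s, x ∉ A a := by
  by_contra hcon
  push_neg at hcon
  have hsub : Metric.ball b ε ⊆ ⋃ a ∈ (↑s : Set α), (A a : Set (Fin n → ℝ)) := by
    intro x hx
    obtain ⟨a, ha, hxa⟩ := hcon x hx
    exact Set.mem_biUnion (Finset.mem_coe.mpr ha) hxa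
  have h0 : volume (⋃ a ∈ (↑s : Set α), (A a : Set (Fin n → ℝ))) = 0 := by
    rw [measure_biUnion_null_iff (μ := (volume : Measure (Fin n → ℝ))) s.countable_toSet]
    exact fun a ha => Measure.addHaar_affineSubspace volume (A a) (hA a ha)
  have hle := measure_mono (μ := (volume : Measure (Fin n → ℝ))) hsub
  rw [h0, nonpos_iff_eq_zero] at hle
  exact (Metric.measure_ball_pos volume b hε).ne' hle

lemma exists_gen_pos {n : ℕ} {ι : Type*} [Fintype ι] (b : ι → (Fin n → ℝ)) {ε : ℝ}
    (hε : 0 < ε) (c : Fin n → ℝ) :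
    ∃ q : ι → (Fin n → ℝ), (∀ j, dist (q j) (b j) < ε) ∧
      ∀ T : Finset ι, T.card ≤ n → c ∉ affineSpan ℝ (q '' ↑T) := by
  classical
  suffices H : ∀ s : Finset ι, ∃ q : ι → Fin n → ℝ, (∀ j ∈ s, dist (q j) (b j) < ε) ∧
      ∀ T ⊆ s, T.card ≤ n → c ∉ affineSpan ℝ (q '' ↑T) by
    obtain ⟨q, h1, h2⟩ := H Finset.univ
    exact ⟨q, fun j => h1 j (Finset.mem_univ j), fun T hT => h2 T (Finset.subset_univ T) hT⟩
  intro s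
  induction s using Finset.induction_on with
  | empty =>
    refine ⟨b, by simp, fun T hT _ => ?_⟩
    rw [Finset.subset_empty.mp hT]
    simp only [Finset.coe_empty, Set.image_empty, AffineSubspace.span_empty]
    intro h
    rwa [← AffineSubspace.mem_coe, AffineSubspace.bot_coe] at h
  | @insert a s ha ih =>
    obtain ⟨q, hq1, hq2⟩ := ih
    set 𝒯 := s.powerset.filter fun T => T.card < n with h𝒯
    have hfr : finrank ℝ (Fin n → ℝ) = n := by
      rw [Module.finrank_pi]; exact Fintype.card_fin n
    have hAprop : ∀ T ∈ 𝒯, affineSpan ℝ (insert c (q '' (↑T : Set ι))) ≠ ⊤ := by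
      intro T hT
      rw [h𝒯, Finset.mem_filter, Finset.mem_powerset] at hT
      refine affineSpan_ne_top' ((T.finite_toSet.image q).insert c) ?_
      rw [hfr]
      calc (insert c (q '' ↑T)).ncard ≤ (q '' (↑T : Set ι)).ncard + 1 :=
            Set.ncard_insert_le _ _
        _ ≤ T.card + 1 := by
            have := Set.ncard_image_le (s := (↑T : Set ι)) (f := q) T.finite_toSet
            rw [Set.ncard_coe_finset] at this
            omega
        _ ≤ n := hT.2
    obtain ⟨x, hx, hxA⟩ :=
      exists_ball_avoid 𝒯 (fun T => affineSpan ℝ (insert c (q '' ↑T))) hAprop (b a) hε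
    refine ⟨Function.update q a x, fun j hj => ?_, fun T hT hTc => ?_⟩
    · rcases Finset.mem_insert.mp hj with rfl | hj'
      · rwa [Function.update_self]
      · rw [Function.update_of_ne (fun h : j = a => ha (h ▸ hj')) ]
        exact hq1 j hj'
    · by_cases haT : a ∈ T
      · -- T = insert a (T.erase a)
        set T' := T.erase a with hT'
        have hT's : T' ⊆ s := by
          intro j hj
          have hjT := Finset.mem_of_mem_erase hj
          rcases Finset.mem_insert.mp (hT hjT) with rfl | h
          · exact absurd rfl (Finset.ne_of_mem_erase hj)
          · exact h
        have himg : Function.update q a x '' ↑T = insert x (q '' ↑T') := by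
          have : (↑T : Set ι) = insert a ↑T' := by
            rw [hT', ← Finset.coe_insert, Finset.insert_erase haT]
          rw [this, Set.image_insert_eq, Function.update_self]
          congr 1
          apply Set.image_congr
          intro j hj
          exact Function.update_of_ne (Finset.ne_of_mem_erase hj) _ _
        rw [himg]
        intro hc
        have hcT' : c ∉ affineSpan ℝ (q '' ↑T') :=
          hq2 T' hT's (le_trans (Finset.card_le_card (Finset.erase_subset _ _)) hTc)
        have := affine_exchange' hc hcT'
        have hmem : T' ∈ 𝒯 := by
          rw [h𝒯, Finset.mem_filter, Finset.mem_powerset]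
          refine ⟨hT's, ?_⟩
          have h1 : T'.card = T.card - 1 := by rw [hT']; exact Finset.card_erase_of_mem haT
          have hTa : 1 ≤ T.card := Finset.card_pos.mpr ⟨a, haT⟩
          omega
        exact hxA T' hmem this
      · have himg : Function.update q a x '' ↑T = q '' ↑T := by
          apply Set.image_congr
          intro j hj
          exact Function.update_of_ne (fun h : j = a => haT (h ▸ hj)) _ _
        rw [himg]
        refine hq2 T (fun j hj => ?_) hTc
        rcases Finset.mem_insert.mp (hT hj) with rfl | h
        · exact absurd hj haT
        · exact h

open Set Topology Filter Module MeasureTheory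

/-- Theorem on Partitions: in a compact Hausdorff space of covering dimension less than `n`,
any `n` pairs of disjoint closed sets admit partitions with empty intersection. -/
theorem stmt4 {X : Type*} [TopologicalSpace X] [CompactSpace X] [T2Space X]
    (n : ℕ) (hdim : covDim X < (n : ℕ∞))
    (A B : Fin n → Set X) (hA : ∀ i, IsClosed (A i)) (hB : ∀ i, IsClosed (B i))
    (hAB : ∀ i, Disjoint (A i) (B i)) :
    ∃ P : Fin n → Set X, (∀ i, IsPartitionBetween (P i) (A i) (B i)) ∧ ⋂ i, P i = ∅ := by
  classical
  -- extract a covering-dimension bound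
  obtain ⟨m, hm, hmn⟩ := sInf_lt_iff.mp hdim
  obtain ⟨k, rfl, hk⟩ := hm
  have hkn : k + 1 ≤ n := by exact_mod_cast Nat.succ_le_of_lt (by exact_mod_cast hmn)
  -- Urysohn functions
  choose φ hφ0 hφ1 hφI using fun i : Fin n =>
    exists_continuous_zero_one_of_isClosed (hA i) (hB i) (hAB i)
  set F : X → (Fin n → ℝ) := fun x i => φ i x with hF
  have hFc : Continuous F := continuous_pi fun i => (φ i).continuous
  -- finite cover by preimages of small balls
  set 𝒰f : X → Set X := fun x => F ⁻¹' (Metric.ball (F x) (1/8)) with h𝒰f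
  have h𝒰o : ∀ x, IsOpen (𝒰f x) := fun x => Metric.isOpen_ball.preimage hFc
  obtain ⟨t, ht⟩ := isCompact_univ.elim_finite_subcover 𝒰f h𝒰o
    (fun x _ => mem_iUnion.mpr ⟨x, Metric.mem_ball_self (by norm_num)⟩)
  have h𝒰cov : ⋃₀ (𝒰f '' ↑t) = univ := by
    apply eq_univ_of_univ_subset
    rw [Set.sUnion_image]
    exact ht
  obtain ⟨𝒱, h𝒱fin, h𝒱o, h𝒱cov, h𝒱ref, h𝒱mult⟩ :=
    hk (𝒰f '' ↑t) (t.finite_toSet.image _) (by rintro U ⟨x, -, rfl⟩; exact h𝒰o x) h𝒰cov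
  -- restrict to nonempty members
  set 𝒱' : Set (Set X) := {V ∈ 𝒱 | V.Nonempty} with h𝒱'
  have h𝒱'fin : 𝒱'.Finite := h𝒱fin.subset (sep_subset _ _)
  haveI : Fintype ↥𝒱' := h𝒱'fin.fintype
  have hcov' : (univ : Set X) ⊆ ⋃ j : ↥𝒱', (j : Set X) := by
    intro y _
    have : y ∈ ⋃₀ 𝒱 := h𝒱cov ▸ mem_univ y
    obtain ⟨V, hV, hyV⟩ := this
    exact mem_iUnion.mpr ⟨⟨V, hV, ⟨y, hyV⟩⟩, hyV⟩
  obtain ⟨pu, hpu⟩ := PartitionOfUnity.exists_isSubordinate isClosed_univ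
    (fun j : ↥𝒱' => (j : Set X)) (fun j => h𝒱o j j.2.1) hcov'
  -- points and centers
  choose xc hxc using fun j : ↥𝒱' => j.2.2
  have href : ∀ j : ↥𝒱', ∃ z ∈ t, (j : Set X) ⊆ 𝒰f z := by
    intro j
    obtain ⟨U, hU, hsub⟩ := h𝒱ref j j.2.1
    obtain ⟨z, hz, rfl⟩ := hU
    exact ⟨z, hz, hsub⟩
  choose z hz hzsub using href
  set bb : ↥𝒱' → (Fin n → ℝ) := fun j => F (xc j) with hbb
  have hb : ∀ j : ↥𝒱', ∀ y ∈ (j : Set X), dist (F y) (bb j) < 1/4 := by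
    intro j y hy
    have h1 : dist (F y) (F (z j)) < 1/8 := by
      simpa [h𝒰f, Metric.mem_ball] using hzsub j hy
    have h2 : dist (F (xc j)) (F (z j)) < 1/8 := by
      simpa [h𝒰f, Metric.mem_ball] using hzsub j (hxc j)
    calc dist (F y) (bb j) ≤ dist (F y) (F (z j)) + dist (F (z j)) (F (xc j)) :=
          dist_triangle _ _ _
      _ < 1/8 + 1/8 := by rw [dist_comm (F (z j))]; exact add_lt_add h1 h2
      _ = 1/4 := by norm_num
  -- general position points
  set c : Fin n → ℝ := fun _ => 1/2 with hc
  obtain ⟨q, hq1, hq2⟩ := exists_gen_pos bb (by norm_num : (0:ℝ) < 1/8) c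
  -- the perturbed map
  set G : Fin n → X → ℝ := fun i y => ∑ j : ↥𝒱', pu j y * q j i with hG
  have hGc : ∀ i, Continuous (G i) := fun i =>
    continuous_finset_sum _ fun j _ => ((pu j).continuous).mul continuous_const
  have hsum : ∀ y, ∑ j : ↥𝒱', pu j y = 1 := fun y => by
    have := pu.sum_eq_one (mem_univ y)
    rwa [finsum_eq_sum_of_fintype] at this
  have hsupp : ∀ (j : ↥𝒱') y, pu j y ≠ 0 → y ∈ (j : Set X) := fun j y h =>
    hpu j (subset_tsupport _ (Function.mem_support.mpr h))
  -- key estimate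
  have hest : ∀ i y, |G i y - φ i y| ≤ 3/8 := by
    intro i y
    have hrw : G i y - φ i y = ∑ j : ↥𝒱', pu j y * (q j i - φ i y) := by
      simp only [mul_sub, Finset.sum_sub_distrib, ← Finset.sum_mul, hsum y, one_mul, hG]
    rw [hrw]
    calc |∑ j : ↥𝒱', pu j y * (q j i - φ i y)|
        ≤ ∑ j : ↥𝒱', |pu j y * (q j i - φ i y)| := Finset.abs_sum_le_sum_abs _ _
      _ ≤ ∑ j : ↥𝒱', pu j y * (3/8) := by
          refine Finset.sum_le_sum fun j _ => ?_
          rw [abs_mul, abs_of_nonneg (pu.nonneg j y)]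
          rcases eq_or_ne (pu j y) 0 with h | h
          · simp [h]
          · refine mul_le_mul_of_nonneg_left ?_ (pu.nonneg j y)
            have hyj := hsupp j y h
            have h1 : dist (q j i) (F y i) ≤ dist (q j) (F y) := dist_le_pi_dist _ _ _
            have h2 : dist (q j) (F y) ≤ dist (q j) (bb j) + dist (bb j) (F y) :=
              dist_triangle _ _ _
            have h3 := hq1 j
            have h4 := hb j y hyj
            rw [dist_comm] at h4
            have : dist (q j i) (F y i) ≤ 3/8 := by
              refine h1.trans (h2.trans ?_)
              linarith
            simpa [Real.dist_eq, hF] using this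
      _ = 3/8 := by rw [← Finset.sum_mul, hsum y, one_mul]
  -- define the partitions
  refine ⟨fun i => (G i) ⁻¹' {1/2}, fun i => ?_, ?_⟩
  · refine ⟨isClosed_singleton.preimage (hGc i), (G i) ⁻¹' (Iio (1/2)), (G i) ⁻¹' (Ioi (1/2)),
      isOpen_Iio.preimage (hGc i), isOpen_Ioi.preimage (hGc i), ?_, ?_, ?_, ?_⟩
    · intro y hy
      have h0 : φ i y = 0 := hφ0 i hy
      have h1 := abs_le.mp (hest i y)
      simp only [mem_preimage, mem_Iio]
      rw [h0] at h1
      linarith [h1.2]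
    · intro y hy
      have h0 : φ i y = 1 := hφ1 i hy
      have h1 := abs_le.mp (hest i y)
      simp only [mem_preimage, mem_Ioi]
      rw [h0] at h1
      linarith [h1.1]
    · refine Set.disjoint_left.mpr fun y h1 h2 => ?_
      simp only [mem_preimage, mem_Iio, mem_Ioi] at h1 h2
      linarith
    · ext y
      simp only [mem_union, mem_preimage, mem_Iio, mem_Ioi, mem_compl_iff, mem_singleton_iff]
      exact ne_iff_lt_or_gt.symm
  · rw [Set.eq_empty_iff_forall_notMem]
    intro y hy
    have hGy : ∀ i, G i y = 1/2 := fun i => by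
      have := mem_iInter.mp hy i
      simpa using this
    set T : Finset ↥𝒱' := Finset.univ.filter (fun j => pu j y ≠ 0) with hT
    have hTsub : T ⊆ Finset.univ.filter fun j : ↥𝒱' => y ∈ (j : Set X) := by
      intro j hj
      rw [Finset.mem_filter] at *
      exact ⟨hj.1, hsupp j y hj.2⟩
    have hcard2 : (Finset.univ.filter fun j : ↥𝒱' => y ∈ (j : Set X)).card ≤ n := by
      have hset : ((fun j : ↥𝒱' => (j : Set X)) '' {j : ↥𝒱' | y ∈ (j : Set X)})
          = {V ∈ 𝒱' | y ∈ V} := by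
        ext V
        constructor
        · rintro ⟨j, hj, rfl⟩; exact ⟨j.2, hj⟩
        · rintro ⟨hV, hyV⟩; exact ⟨⟨V, hV⟩, hyV, rfl⟩
      have h1 : {j : ↥𝒱' | y ∈ (j : Set X)}.ncard = ({V ∈ 𝒱' | y ∈ V}).ncard := by
        rw [← hset, Set.ncard_image_of_injective _ Subtype.val_injective]
      have h2 : ({V ∈ 𝒱' | y ∈ V}).ncard ≤ ({V ∈ 𝒱 | y ∈ V}).ncard :=
        Set.ncard_le_ncard (fun V hV => ⟨hV.1.1, hV.2⟩) (h𝒱fin.subset (sep_subset _ _))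
      have h3 := h𝒱mult y
      have h4 : {j : ↥𝒱' | y ∈ (j : Set X)}
          = ↑(Finset.univ.filter fun j : ↥𝒱' => y ∈ (j : Set X)) := by
        ext j; simp
      rw [h4, Set.ncard_coe_finset] at h1
      omega
    have hTcard : T.card ≤ n := le_trans (Finset.card_le_card hTsub) hcard2
    have hw : ∑ j ∈ T, pu j y = 1 := by
      rw [hT, Finset.sum_filter_ne_zero, hsum y]
    have hcc : c = ∑ j ∈ T, pu j y • q j := by
      funext i
      have hTy : ∑ j ∈ T, pu j y * q j i = ∑ j : ↥𝒱', pu j y * q j i := by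
        refine Finset.sum_subset (Finset.subset_univ T) fun j _ hj => ?_
        rw [hT, Finset.mem_filter, not_and] at hj
        have : pu j y = 0 := by
          by_contra h
          exact (hj (Finset.mem_univ j)) h
        rw [this, zero_mul]
      simp only [Finset.sum_apply, Pi.smul_apply, smul_eq_mul]
      rw [hTy]
      exact (hGy i).symm
    have hmem : c ∈ affineSpan ℝ (q '' ↑T) := by
      have hw' : ∑ j : {x // x ∈ T}, pu j.1 y = 1 := by
        rw [Finset.sum_coe_sort T (fun j => pu j y)]; exact hw
      have hmem0 := affineCombination_mem_affineSpan (k := ℝ)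
        (w := fun j : {x // x ∈ T} => pu j.1 y) hw' (fun j : {x // x ∈ T} => q j.1)
      rw [Finset.affineCombination_eq_linear_combination _ _ _ hw'] at hmem0
      have hrange : Set.range (fun j : {x // x ∈ T} => q j.1) = q '' ↑T := by
        rw [show (fun j : {x // x ∈ T} => q j.1) = q ∘ Subtype.val from rfl, Set.range_comp,
          Subtype.range_val]
      have hsum2 : ∑ j : {x // x ∈ T}, pu j.1 y • q j.1 = ∑ j ∈ T, pu j y • q j :=
        Finset.sum_coe_sort T (fun j => pu j y • q j)
      rw [hrange] at hmem0
      rw [hcc, ← hsum2]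
      exact hmem0
    exact hq2 T hTcard hmem
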